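/- arXiv:2603.24280 — 5 statements merged into one kernel-verified Lean document; each statement's English description precedes it below -/
import Mathlib

section
/- Let k₁, k₂, k₃ be real numbers, not all zero, and let C = {[x:y:z] | k₁yz + k₂zx + k₃xy = 0} be the circumconic of the triangle A=[1:0:0], B=[0:1:0], C=[0:0:1]. Let l, m, n be pairwise distinct nonzero reals, and set D=[0:n:−m], E=[n:0:−l], F=[m:−l:0] (so that D, E, F are collinear, lying on the line lx+my+nz=0). Define the conics C₁ = {k₁yz+k₂zx+k₃xy + (x+y+z)(mk₃/(l−m)·y + nk₂/(l−n)·z) = 0}, C₂ = {k₁yz+k₂zx+k₃xy + (x+y+z)(lk₃/(m−l)·x + nk₁/(m−n)·z) = 0}, C₃ = {k₁yz+k₂zx+k₃xy + (x+y+z)(lk₂/(n−l)·x + mk₁/(n−m)·y) = 0}. Then: C₁ passes through A, E, F; C₂ passes through B, D, F; C₃ passes through C, D, E; and the point Mq = [mn k₁/(m−n) : nl k₂/(n−l) : lm k₃/(l−m)] lies on all four conics C, C₁, C₂, C₃. -/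
/-- The general equation of a circle in the metric-affine plane with circumcircle
k₁yz+k₂zx+k₃xy = 0 of the reference triangle and line at infinity x+y+z = 0. -/
def circleEq (k1 k2 k3 p q r x y z : ℝ) : Prop :=
  k1 * y * z + k2 * z * x + k3 * x * y + (x + y + z) * (p * x + q * y + r * z) = 0

set_option maxHeartbeats 2000000 in
/-- the affine Miquel–Steiner theorem, explicit form. -/
theorem stmt1 (k1 k2 k3 l m n : ℝ)
    (hk : ¬(k1 = 0 ∧ k2 = 0 ∧ k3 = 0))
    (hl : l ≠ 0) (hm : m ≠ 0) (hn : n ≠ 0)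
    (hlm : l ≠ m) (hmn : m ≠ n) (hnl : n ≠ l)
    (Mqx Mqy Mqz : ℝ)
    (hMqx : Mqx = m * n * k1 / (m - n))
    (hMqy : Mqy = n * l * k2 / (n - l))
    (hMqz : Mqz = l * m * k3 / (l - m)) :
    -- D, E, F lie on the line l x + m y + n z = 0 (hence are collinear)
    (l * 0 + m * n + n * (-m) = 0 ∧ l * n + m * 0 + n * (-l) = 0 ∧
      l * m + m * (-l) + n * 0 = 0) ∧
    -- C₁ passes through A, E, F
    (circleEq k1 k2 k3 0 (m * k3 / (l - m)) (n * k2 / (l - n)) 1 0 0 ∧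
     circleEq k1 k2 k3 0 (m * k3 / (l - m)) (n * k2 / (l - n)) n 0 (-l) ∧
     circleEq k1 k2 k3 0 (m * k3 / (l - m)) (n * k2 / (l - n)) m (-l) 0) ∧
    -- C₂ passes through B, D, F
    (circleEq k1 k2 k3 (l * k3 / (m - l)) 0 (n * k1 / (m - n)) 0 1 0 ∧
     circleEq k1 k2 k3 (l * k3 / (m - l)) 0 (n * k1 / (m - n)) 0 n (-m) ∧
     circleEq k1 k2 k3 (l * k3 / (m - l)) 0 (n * k1 / (m - n)) m (-l) 0) ∧
    -- C₃ passes through C, D, E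
    (circleEq k1 k2 k3 (l * k2 / (n - l)) (m * k1 / (n - m)) 0 0 0 1 ∧
     circleEq k1 k2 k3 (l * k2 / (n - l)) (m * k1 / (n - m)) 0 0 n (-m) ∧
     circleEq k1 k2 k3 (l * k2 / (n - l)) (m * k1 / (n - m)) 0 n 0 (-l)) ∧
    -- the Miquel–Steiner point lies on all four circles
    (k1 * Mqy * Mqz + k2 * Mqz * Mqx + k3 * Mqx * Mqy = 0 ∧
     circleEq k1 k2 k3 0 (m * k3 / (l - m)) (n * k2 / (l - n)) Mqx Mqy Mqz ∧
     circleEq k1 k2 k3 (l * k3 / (m - l)) 0 (n * k1 / (m - n)) Mqx Mqy Mqz ∧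
     circleEq k1 k2 k3 (l * k2 / (n - l)) (m * k1 / (n - m)) 0 Mqx Mqy Mqz) := by
  have h1 : l - m ≠ 0 := sub_ne_zero.mpr hlm
  have h2 : m - n ≠ 0 := sub_ne_zero.mpr hmn
  have h3 : n - l ≠ 0 := sub_ne_zero.mpr hnl
  have h4 : l - n ≠ 0 := sub_ne_zero.mpr hnl.symm
  have h5 : m - l ≠ 0 := sub_ne_zero.mpr hlm.symm
  have h6 : n - m ≠ 0 := sub_ne_zero.mpr hmn.symm
  subst hMqx hMqy hMqz
  simp only [circleEq]
  refine ⟨⟨by ring, by ring, by ring⟩, ⟨?_, ?_, ?_⟩, ⟨?_, ?_, ?_⟩, ⟨?_, ?_, ?_⟩, ?_, ?_, ?_, ?_⟩ <;>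
    field_simp <;> ring
end

section
/- Let q_A,q_B,q_C ∈ ℝ, A=[1:0:0], B=[0:1:0], C=[0:0:1], and D=[d_A:d_B:d_C] with d_A > 0, all d_i ≠ 0. Define α = sgn(d_B)√|d_B²+2q_A d_B d_C+d_C²|, β = √|d_A²+2q_B d_C d_A+d_C²|, γ = √|d_A²+2q_C d_A d_B+d_B²|, δ = √|d_A²+d_B²+d_C²+2q_A d_B d_C+2q_B d_C d_A+2q_C d_A d_B|, and assume α,β,γ,δ ≠ 0. Then the three points Mq_A = [d_A(δ(d_Aβγ−β−γ)+βγ) : d_B δγ(β(d_A+d_C)−1) : d_C δβ(γ(d_A+d_B)−1)], Mq_B = [d_A δγ(α(d_B+d_C)−1) : d_B(δ(d_Bαγ−α−γ)+αγ) : d_C δα(γ(d_A+d_B)−1)], Mq_C = [d_A δβ(α(d_B+d_C)−1) : d_B δα(β(d_A+d_C)−1) : d_C(δ(d_Cαβ−α−β)+αβ)] form a triangle perspective to ABC, i.e., the lines A×Mq_A, B×Mq_B, C×Mq_C are concurrent, with perspector Q = [d_A βγ(α(d_B+d_C)−1) : d_B αγ(β(d_A+d_C)−1) : d_C αβ(γ(d_A+d_B)−1)].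 -/
/-- Cross product in ℝ³. -/
def cross3 (u v : ℝ × ℝ × ℝ) : ℝ × ℝ × ℝ :=
  (u.2.1 * v.2.2 - u.2.2 * v.2.1, u.2.2 * v.1 - u.1 * v.2.2, u.1 * v.2.1 - u.2.1 * v.1)

/-- Dot product in ℝ³. -/
def dot3 (u v : ℝ × ℝ × ℝ) : ℝ := u.1 * v.1 + u.2.1 * v.2.1 + u.2.2 * v.2.2

/-- Theorem 2: the Miquel–Steiner triangle Mq_A Mq_B Mq_C of the
quadrangle {A,B,C,D} is perspective to ABC, with perspector Q: the point Q lies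
on each of the lines A×Mq_A, B×Mq_B, C×Mq_C, so these lines are concurrent. -/
theorem stmt5 (qA qB qC dA dB dC α β γ δ : ℝ)
    (hdA : 0 < dA) (hdB : dB ≠ 0) (hdC : dC ≠ 0)
    (hα : α = Real.sign dB * Real.sqrt |dB ^ 2 + 2 * qA * dB * dC + dC ^ 2|)
    (hβ : β = Real.sqrt |dA ^ 2 + 2 * qB * dC * dA + dC ^ 2|)
    (hγ : γ = Real.sqrt |dA ^ 2 + 2 * qC * dA * dB + dB ^ 2|)
    (hδ : δ = Real.sqrt |dA ^ 2 + dB ^ 2 + dC ^ 2 + 2 * qA * dB * dC +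
        2 * qB * dC * dA + 2 * qC * dA * dB|)
    (hα0 : α ≠ 0) (hβ0 : β ≠ 0) (hγ0 : γ ≠ 0) (hδ0 : δ ≠ 0)
    (A B C MqA MqB MqC Q : ℝ × ℝ × ℝ)
    (hA : A = (1, 0, 0)) (hB : B = (0, 1, 0)) (hC : C = (0, 0, 1))
    (hMqA : MqA = (dA * (δ * (dA * β * γ - β - γ) + β * γ),
                   dB * δ * γ * (β * (dA + dC) - 1),
                   dC * δ * β * (γ * (dA + dB) - 1)))
    (hMqB : MqB = (dA * δ * γ * (α * (dB + dC) - 1),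
                   dB * (δ * (dB * α * γ - α - γ) + α * γ),
                   dC * δ * α * (γ * (dA + dB) - 1)))
    (hMqC : MqC = (dA * δ * β * (α * (dB + dC) - 1),
                   dB * δ * α * (β * (dA + dC) - 1),
                   dC * (δ * (dC * α * β - α - β) + α * β)))
    (hQ : Q = (dA * β * γ * (α * (dB + dC) - 1),
               dB * α * γ * (β * (dA + dC) - 1),
               dC * α * β * (γ * (dA + dB) - 1))) :
    dot3 Q (cross3 A MqA) = 0 ∧ dot3 Q (cross3 B MqB) = 0 ∧
      dot3 Q (cross3 C MqC) = 0 := by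
  subst hA hB hC hMqA hMqB hMqC hQ
  refine ⟨?_, ?_, ?_⟩ <;> simp [dot3, cross3] <;> ring
end

section
/- With the notation of the Miquel–Steiner triangle (α, β, γ, δ as defined from D=[d_A:d_B:d_C] and the absolute conic coefficients q_A, q_B, q_C), the Miquel–Steiner point Mq_{ABCD} = [d_A δγ(α(d_B+d_C)−1) : d_B(δ(d_Bαγ−α−γ)+αγ) : d_C δα(γ(d_A+d_B)−1)] lies on the line joining the diagonal points P₁ = (A×D)×(B×C) and P₃ = (C×D)×(A×B) if and only if δ(d_A+d_B+d_C) = ±1, i.e., if and only if D lies on the circumcircle (q_A−1)yz+(q_B−1)zx+(q_C−1)xy = 0 of triangle ABC. Concretely: the determinant condition is equivalent to d_A d_B d_C · αγ · (δ(d_A+d_B+d_C)−1) = 0 (for the branch δ = 1/(d_A+d_B+d_C)). -/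
/-- Theorem 3, computational core: the incidence of the
Miquel–Steiner point Mq_{ABCD} with the line P₁ × P₃ (line coordinates
(d_B d_C, −d_A d_C, d_A d_B)) equals d_A d_B d_C·αγ·(δ(d_A+d_B+d_C)−1); hence
Mq_{ABCD} lies on that line iff δ(d_A+d_B+d_C) = 1 (the branch δ = 1/(d_A+d_B+d_C)),
i.e. iff D lies on the circumcircle of triangle ABC. -/
theorem stmt6 (dA dB dC α γ δ : ℝ)
    (hdA : 0 < dA) (hdB : dB ≠ 0) (hdC : dC ≠ 0)
    (hα : α ≠ 0) (hγ : γ ≠ 0) (hδ : δ ≠ 0) :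
    (dA * δ * γ * (α * (dB + dC) - 1)) * (dB * dC) +
      (dB * (δ * (dB * α * γ - α - γ) + α * γ)) * (-(dA * dC)) +
      (dC * δ * α * (γ * (dA + dB) - 1)) * (dA * dB) =
      dA * dB * dC * α * γ * (δ * (dA + dB + dC) - 1) ∧
    ((dA * δ * γ * (α * (dB + dC) - 1)) * (dB * dC) +
      (dB * (δ * (dB * α * γ - α - γ) + α * γ)) * (-(dA * dC)) +
      (dC * δ * α * (γ * (dA + dB) - 1)) * (dA * dB) = 0 ↔
      δ * (dA + dB + dC) = 1) := by
  have h1 : (dA * δ * γ * (α * (dB + dC) - 1)) * (dB * dC) +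
      (dB * (δ * (dB * α * γ - α - γ) + α * γ)) * (-(dA * dC)) +
      (dC * δ * α * (γ * (dA + dB) - 1)) * (dA * dB) =
      dA * dB * dC * α * γ * (δ * (dA + dB + dC) - 1) := by ring
  refine ⟨h1, ?_⟩
  rw [h1]
  have hne : dA * dB * dC * α * γ ≠ 0 := by
    exact mul_ne_zero (mul_ne_zero (mul_ne_zero (mul_ne_zero hdA.ne' hdB) hdC) hα) hγ
  constructor
  · intro h
    have := (mul_eq_zero.mp h).resolve_left hne
    linarith
  · intro h
    rw [h]
    ring
end

section
/- Let A=[1:0:0], B=[0:1:0], C=[0:0:1] and D=[0:n:−m], E=[n:0:−l], F=[m:−l:0] for reals l,m,n with lmn ≠ 0. Then D, E, F are collinear, D lies on line B×C, E on line C×A, F on line A×B. Moreover, the Miquel point Mq = [mnk₁(n−l)(l−m) : nlk₂(l−m)(m−n) : lmk₃(m−n)(n−l)] (equivalently [mnk₁/(m−n) : nlk₂/(n−l) : lmk₃/(l−m)] when the denominators are nonzero) satisfies the circumcircle equation k₁yz+k₂zx+k₃xy + (x+y+z)·(mk₃/(l−m)·y + nk₂/(l−n)·z) = 0 of triangle AEF.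 -/
/-- incidences of D, E, F and of the Miquel point with the
circumcircle of triangle AEF. -/
theorem stmt11 (k1 k2 k3 l m n : ℝ) (hlmn : l * m * n ≠ 0)
    (hlm : l ≠ m) (hmn : m ≠ n) (hnl : n ≠ l)
    (A B C D E F : ℝ × ℝ × ℝ)
    (hA : A = (1, 0, 0)) (hB : B = (0, 1, 0)) (hC : C = (0, 0, 1))
    (hD : D = (0, n, -m)) (hE : E = (n, 0, -l)) (hF : F = (m, -l, 0))
    (Mqx Mqy Mqz : ℝ)
    (hMqx : Mqx = m * n * k1 * (n - l) * (l - m))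
    (hMqy : Mqy = n * l * k2 * (l - m) * (m - n))
    (hMqz : Mqz = l * m * k3 * (m - n) * (n - l)) :
    -- D, E, F are collinear
    dot3 D (cross3 E F) = 0 ∧
    -- D ∈ B×C, E ∈ C×A, F ∈ A×B
    dot3 D (cross3 B C) = 0 ∧ dot3 E (cross3 C A) = 0 ∧ dot3 F (cross3 A B) = 0 ∧
    -- Mq satisfies the circumcircle equation of triangle AEF
    k1 * Mqy * Mqz + k2 * Mqz * Mqx + k3 * Mqx * Mqy +
      (Mqx + Mqy + Mqz) * (m * k3 / (l - m) * Mqy + n * k2 / (l - n) * Mqz) = 0 := by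
  subst hA hB hC hD hE hF hMqx hMqy hMqz
  have hlm' : l - m ≠ 0 := sub_ne_zero.mpr hlm
  have hln' : l - n ≠ 0 := sub_ne_zero.mpr (Ne.symm hnl)
  refine ⟨by simp [dot3, cross3]; ring, by simp [dot3, cross3], by simp [dot3, cross3],
    by simp [dot3, cross3], ?_⟩
  field_simp
  ring
end

section
/- Let l,m,n be pairwise distinct nonzero reals and k₁,k₂,k₃ reals. The four circles C: k₁yz+k₂zx+k₃xy=0, C₁: C + (x+y+z)(mk₃/(l−m)·y + nk₂/(l−n)·z)=0, C₂: C + (x+y+z)(lk₃/(m−l)·x + nk₁/(m−n)·z)=0, C₃: C + (x+y+z)(lk₂/(n−l)·x + mk₁/(n−m)·y)=0 have the property that for each of the six pairs, the radical axis (the line px+qy+rz=0 given by the difference of the two circle equations divided by x+y+z) passes through the common vertex of the corresponding two component triangles: e.g., the radical axis of C and C₁, namely mk₃/(l−m)·y + nk₂/(l−n)·z = 0, passes through A=[1:0:0]; the radical axis of C₁ and C₂ passes through F=[m:−l:0]; etc. -/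
/-- each of the six radical axes of the four circles
C, C₁, C₂, C₃ passes through the common vertex of the two corresponding
component triangles (ABC, AEF, BDF, CDE with D=[0:n:−m], E=[n:0:−l], F=[m:−l:0]).
The radical axis of two circles k₁yz+k₂zx+k₃xy+(x+y+z)Lᵢ = 0 is L₁−L₂ = 0. -/
theorem stmt16 (k1 k2 k3 l m n : ℝ)
    (hl : l ≠ 0) (hm : m ≠ 0) (hn : n ≠ 0)
    (hlm : l ≠ m) (hmn : m ≠ n) (hnl : n ≠ l) :
    -- radical axis of C and C₁ passes through A = [1:0:0]
    (m * k3 / (l - m) * 0 + n * k2 / (l - n) * 0 = 0) ∧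
    -- radical axis of C and C₂ passes through B = [0:1:0]
    (l * k3 / (m - l) * 0 + n * k1 / (m - n) * 0 = 0) ∧
    -- radical axis of C and C₃ passes through C = [0:0:1]
    (l * k2 / (n - l) * 0 + m * k1 / (n - m) * 0 = 0) ∧
    -- radical axis of C₁ and C₂ passes through F = [m:−l:0]
    ((0 - l * k3 / (m - l)) * m + (m * k3 / (l - m) - 0) * (-l) +
      (n * k2 / (l - n) - n * k1 / (m - n)) * 0 = 0) ∧
    -- radical axis of C₁ and C₃ passes through E = [n:0:−l]
    ((0 - l * k2 / (n - l)) * n + (m * k3 / (l - m) - m * k1 / (n - m)) * 0 +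
      (n * k2 / (l - n) - 0) * (-l) = 0) ∧
    -- radical axis of C₂ and C₃ passes through D = [0:n:−m]
    ((l * k3 / (m - l) - l * k2 / (n - l)) * 0 + (0 - m * k1 / (n - m)) * n +
      (n * k1 / (m - n) - 0) * (-m) = 0) := by
  have hml : m - l ≠ 0 := sub_ne_zero.mpr (Ne.symm hlm)
  have hlm' : l - m ≠ 0 := sub_ne_zero.mpr hlm
  have hln : l - n ≠ 0 := sub_ne_zero.mpr (Ne.symm hnl)
  have hnl' : n - l ≠ 0 := sub_ne_zero.mpr hnl
  have hmn' : m - n ≠ 0 := sub_ne_zero.mpr hmn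
  have hnm : n - m ≠ 0 := sub_ne_zero.mpr (Ne.symm hmn)
  refine ⟨by ring, by ring, by ring, ?_, ?_, ?_⟩ <;> field_simp <;> ring
end
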